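/- Let b = sqrt(3/8) and define on ℝ \ {0}: φ(x) = (x²+b²)³/(2b·x⁴), ū(x) = x/(x²+b²), ū_x(x) = (b²−x²)/(x²+b²)², and ω̄(x) = −2bx/(x²+b²)² with derivative ω̄'(x). Then for every x ≠ 0, (1/(2φ(x)))·d/dx[ ( x/3 + ū(x)/2 )·φ(x) ] + ( −1 + ū_x(x) ) + (1/φ(x))·( (4b/9)·(1/x²) + (1/(16b))·( ω̄'(x)·φ(x) )²·x⁴ ) ≤ −1/2. -/

import Mathlib

open Real

noncomputable def b0 : ℝ := Real.sqrt (3/8)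

noncomputable def phi (x : ℝ) : ℝ := (x^2 + b0^2)^3 / (2 * b0 * x^4)

noncomputable def ubar (x : ℝ) : ℝ := x / (x^2 + b0^2)

noncomputable def ubarx (x : ℝ) : ℝ := (b0^2 - x^2) / (x^2 + b0^2)^2

noncomputable def wbar (x : ℝ) : ℝ := -2 * b0 * x / (x^2 + b0^2)^2

lemma hb2 : b0^2 = 3/8 := Real.sq_sqrt (by norm_num)

lemma hb0 : 0 < b0 := Real.sqrt_pos.mpr (by norm_num)

/-- The damping coefficient `S(1/3, −1, 1/2, x)` of the linearized weighted
`L²` estimate is at most `−1/2` for every `x ≠ 0`. -/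
theorem damping_L2_estimate :
    ∀ x : ℝ, x ≠ 0 →
      (1 / (2 * phi x)) * deriv (fun y => (y / 3 + ubar y / 2) * phi y) x
        + (-1 + ubarx x)
        + (1 / phi x) * ((4 * b0 / 9) * (1 / x^2)
            + (1 / (16 * b0)) * (deriv wbar x * phi x)^2 * x^4)
      ≤ -1/2 := by
  intro x hx
  have hb2 := hb2
  have hb0 := hb0
  have hs : (0:ℝ) < x^2 + b0^2 := by nlinarith [sq_nonneg x]
  have hsne : x^2 + b0^2 ≠ 0 := hs.ne'
  have hx4 : (2:ℝ) * b0 * x^4 ≠ 0 := by positivity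
  have h1 : HasDerivAt (fun y : ℝ => y^2 + b0^2) (2*x) x := by
    simpa using (hasDerivAt_pow 2 x).add_const (b0^2)
  have hubar : HasDerivAt (fun y : ℝ => y/(y^2+b0^2))
      ((1*(x^2+b0^2) - x*(2*x))/(x^2+b0^2)^2) x :=
    (hasDerivAt_id x).div h1 hsne
  have hnum : HasDerivAt (fun y : ℝ => (y^2+b0^2)^3) (3*(x^2+b0^2)^2*(2*x)) x := by
    simpa using h1.fun_pow 3
  have hden : HasDerivAt (fun y : ℝ => 2*b0*y^4) (2*b0*(4*x^3)) x := by
    simpa [mul_assoc, mul_comm, mul_left_comm] using (hasDerivAt_pow 4 x).const_mul (2*b0)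
  have hphi : HasDerivAt (fun y : ℝ => (y^2+b0^2)^3/(2*b0*y^4))
      ((3*(x^2+b0^2)^2*(2*x)*(2*b0*x^4) - (x^2+b0^2)^3*(2*b0*(4*x^3)))/(2*b0*x^4)^2) x :=
    hnum.div hden hx4
  have hg : HasDerivAt (fun y : ℝ => y/3 + y/(y^2+b0^2)/2)
      (1/3 + ((1*(x^2+b0^2) - x*(2*x))/(x^2+b0^2)^2)/2) x :=
    ((hasDerivAt_id x).div_const 3).add (hubar.div_const 2)
  have hF := hg.mul hphi
  have hdF : deriv (fun y => (y / 3 + ubar y / 2) * phi y) x =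
      (1/3 + ((1*(x^2+b0^2) - x*(2*x))/(x^2+b0^2)^2)/2) * ((x^2+b0^2)^3/(2*b0*x^4))
      + (x/3 + x/(x^2+b0^2)/2) *
        ((3*(x^2+b0^2)^2*(2*x)*(2*b0*x^4) - (x^2+b0^2)^3*(2*b0*(4*x^3)))/(2*b0*x^4)^2) := by
    simp only [ubar, phi]
    exact hF.deriv
  have hwnum : HasDerivAt (fun y : ℝ => -2*b0*y) (-2*b0) x := by
    simpa using (hasDerivAt_id x).const_mul (-2*b0)
  have hwden : HasDerivAt (fun y : ℝ => (y^2+b0^2)^2) (2*(x^2+b0^2)*(2*x)) x := by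
    simpa using h1.fun_pow 2
  have hW : deriv wbar x =
      ((-2*b0)*(x^2+b0^2)^2 - (-2*b0*x)*(2*(x^2+b0^2)*(2*x)))/((x^2+b0^2)^2)^2 := by
    have hwb : wbar = fun y : ℝ => -2*b0*y/((y^2+b0^2)^2) := rfl
    rw [hwb]
    exact (hwnum.div hwden (pow_ne_zero 2 hsne)).deriv
  rw [hdF, hW, ← sub_nonpos]
  have helper : ∀ A B : ℝ, A = B → B ≤ 0 → A ≤ 0 := by intro A B h1 h2; rw [h1]; exact h2
  refine helper _ (-(5*x^2/(12*(x^2+b0^2)^3))) ?_ (neg_nonpos.mpr (by positivity))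
  simp only [phi, ubarx]
  have hbne := hb0.ne'
  field_simp
  ring_nf
  linear_combination (-20736*x^4 - 20736*b0^4 + x^2*(-41472*b0^2 - 23040)) * hb2
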